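/- Let X = ∏_{i=1}^v X_i be the Cartesian product of digital images (X_i,κ_i), equipped with the normal product adjacency κ = NP_v(κ_1,…,κ_v), and suppose each X_i is connected. Let A ⊆ X be nonempty and let A_i = p_i(A) be the projection of A to the i-th factor. If (X,κ) is (A,m,n)-limited, then for each index i, (X_i,κ_i) is (A_i,m,n)-limited. -/

import Mathlib

/-- A function between digital images (graphs) is digitally continuous if adjacent
points map to equal or adjacent points. -/
def DigContinuous {V W : Type*} (G : SimpleGraph V) (H : SimpleGraph W) (f : V → W) : Prop :=
  ∀ x y : V, G.Adj x y → f x = f y ∨ H.Adj (f x) (f y)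

/-- `f` restricted to `A` is an `m`-map: it moves each point of `A` a graph distance of at
most `m`. -/
def IsMMapOn {V : Type*} (G : SimpleGraph V) (f : V → V) (A : Set V) (m : ℕ) : Prop :=
  ∀ a ∈ A, G.dist a (f a) ≤ m

/-- `A` is an `(m,n)`-limiting set for `(X,κ)`: every continuous self-map whose restriction
to `A` is an `m`-map is an `n`-map. -/
def IsLimiting {V : Type*} (G : SimpleGraph V) (A : Set V) (m n : ℕ) : Prop :=
  ∀ f : V → V, DigContinuous G G f → IsMMapOn G f A m → IsMMapOn G f Set.univ n

/-- `A` is a minimal `(m,n)`-limiting set: it is limiting and no proper subset is. -/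
def IsMinimalLimiting {V : Type*} (G : SimpleGraph V) (A : Set V) (m n : ℕ) : Prop :=
  IsLimiting G A m n ∧ ∀ B : Set V, B ⊂ A → ¬ IsLimiting G B m n

/-- The normal (strong) product adjacency `NP_v(κ_1, …, κ_v)` on a product of digital
images: distinct points are adjacent iff in each coordinate they are equal or adjacent
(whence they are adjacent in at least one coordinate). -/
def NPgraph {ι : Type*} (X : ι → Type*) (G : ∀ i, SimpleGraph (X i)) :
    SimpleGraph (∀ i, X i) where
  Adj x y := x ≠ y ∧ ∀ i, x i = y i ∨ (G i).Adj (x i) (y i)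
  symm := by
    constructor
    rintro x y ⟨hne, h⟩
    exact ⟨hne.symm, fun i => (h i).imp Eq.symm (fun hadj => (G i).adj_symm hadj)⟩
  loopless := by
    constructor
    rintro x ⟨hne, -⟩
    exact hne rfl


/-!
A continuous self-map `g` of the factor `X i` extends to the continuous self-map of the
product that applies `g` to the `i`-th coordinate and fixes the others. Digitally continuous
maps are `1`-Lipschitz for the graph metric, and both the projection to `X i` and the
inclusion of `X i` as the fibre through a point are continuous, so the extension moves every
point exactly as far as `g` moves its `i`-th coordinate. Hence the extension is an `m`-map
on `A` when `g` is one on `p_i(A)`, and `g` is an `n`-map because the extension is, evaluated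
at a point of `A` with its `i`-th coordinate replaced.
-/

open SimpleGraph Function

section DigContinuous

variable {V W : Type*} {G : SimpleGraph V} {H : SimpleGraph W} {φ : V → W}

lemma DigContinuous.exists_walk_length_le (hφ : DigContinuous G H φ) {u v : V}
    (p : G.Walk u v) : ∃ q : H.Walk (φ u) (φ v), q.length ≤ p.length := by
  induction p with
  | nil => exact ⟨Walk.nil, le_rfl⟩
  | @cons u w z h p ih =>
    obtain ⟨q, hq⟩ := ih
    rcases hφ u w h with heq | hadj
    · exact ⟨q.copy heq.symm rfl, by simpa using Nat.le_succ_of_le hq⟩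
    · exact ⟨Walk.cons hadj q, by simpa using hq⟩

lemma DigContinuous.reachable (hφ : DigContinuous G H φ) {u v : V} (h : G.Reachable u v) :
    H.Reachable (φ u) (φ v) :=
  let ⟨p⟩ := h
  let ⟨q, _⟩ := hφ.exists_walk_length_le p
  ⟨q⟩

lemma DigContinuous.dist_le (hφ : DigContinuous G H φ) {u v : V} (h : G.Reachable u v) :
    H.dist (φ u) (φ v) ≤ G.dist u v := by
  obtain ⟨p, hp⟩ := h.exists_walk_length_eq_dist
  obtain ⟨q, hq⟩ := hφ.exists_walk_length_le p
  exact (SimpleGraph.dist_le q).trans (hp ▸ hq)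

end DigContinuous

namespace NPgraph

variable {ι : Type*} {X : ι → Type*} {G : ∀ i, SimpleGraph (X i)}

lemma digContinuous_apply (i : ι) : DigContinuous (NPgraph X G) (G i) (fun x => x i) :=
  fun _ _ h => h.2 i

variable [DecidableEq ι]

lemma digContinuous_update (x : ∀ j, X j) (i : ι) :
    DigContinuous (G i) (NPgraph X G) (update x i) := by
  intro a b hab
  refine Or.inr ⟨fun h => hab.ne (by simpa using congrFun h i), fun j => ?_⟩
  by_cases hj : j = i
  · subst hj
    simpa using Or.inr hab
  · simp [update_of_ne hj]

lemma digContinuous_update_apply {i : ι} {g : X i → X i} (hg : DigContinuous (G i) (G i) g) :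
    DigContinuous (NPgraph X G) (NPgraph X G) (fun x => update x i (g (x i))) := by
  intro x y hxy
  by_cases hne : update x i (g (x i)) = update y i (g (y i))
  · exact Or.inl hne
  refine Or.inr ⟨hne, fun j => ?_⟩
  by_cases hj : j = i
  · subst hj
    simp only [update_self]
    rcases hxy.2 j with he | ha
    · exact Or.inl (by rw [he])
    · exact hg _ _ ha
  · simpa only [update_of_ne hj] using hxy.2 j

lemma dist_update_eq {x : ∀ j, X j} {i : ι} {c : X i} (h : (G i).Reachable (x i) c) :
    (NPgraph X G).dist x (update x i c) = (G i).dist (x i) c := by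
  have hup := (digContinuous_update (G := G) x i).dist_le h
  rw [update_eq_self] at hup
  refine le_antisymm hup ?_
  have hreach := (digContinuous_update (G := G) x i).reachable h
  rw [update_eq_self] at hreach
  simpa using (digContinuous_apply (G := G) i).dist_le hreach

end NPgraph

theorem stmt16 {v : ℕ} (X : Fin v → Type*) (G : ∀ i, SimpleGraph (X i))
    (hconn : ∀ i, (G i).Connected)
    (A : Set (∀ i, X i)) (hA : A.Nonempty) (m n : ℕ)
    (hlim : IsLimiting (NPgraph X G) A m n) :
    ∀ i : Fin v, IsLimiting (G i) ((fun x => x i) '' A) m n := by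
  intro i g hg hgm
  have hdist : ∀ x : ∀ j, X j, (NPgraph X G).dist x (update x i (g (x i))) =
      (G i).dist (x i) (g (x i)) :=
    fun x => NPgraph.dist_update_eq ((hconn i).preconnected _ _)
  have hext := hlim _ (NPgraph.digContinuous_update_apply hg)
    (fun a ha => (hdist a).trans_le (hgm (a i) ⟨a, ha, rfl⟩))
  intro b _
  obtain ⟨a, -⟩ := hA
  simpa using (hdist (update a i b)).symm.trans_le (hext (update a i b) trivial)
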